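/- Let ÷ be an AGM contraction operator with contraction-compatible faithful assignment Ψ ↦ ≤_Ψ. Then ÷ satisfies the independence postulate (IC_ind): if ¬α ⊨ γ and Ψ ÷ β ⊭ (¬α → β), then Ψ ÷ α ⊨ γ implies Ψ ÷ α ÷ β ⊨ γ, if and only if the assignment satisfies (IC^rel_ind): whenever ω₁ ⊨ ¬α and ω₂ ⊨ α with ω₂ ∉ [[Ψ]], then ω₁ ≤_Ψ ω₂ implies ω₁ <_{Ψ÷α} ω₂. -/

import Mathlib

inductive Form (V : Type) : Type
  | var : V → Form V
  | falsum : Form V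
  | imp : Form V → Form V → Form V

namespace Form

def eval {V : Type} (w : V → Bool) : Form V → Bool
  | var v => w v
  | falsum => false
  | imp a b => !(eval w a) || eval w b

def neg {V : Type} (a : Form V) : Form V := imp a falsum

def top {V : Type} : Form V := neg falsum

def conj {V : Type} (a b : Form V) : Form V := neg (imp a (neg b))

end Form

/-- Worlds (propositional interpretations) over the signature `V`. -/
abbrev World (V : Type) := V → Bool

/-- Models of a single formula. -/
def FMod {V : Type} (a : Form V) : Set (World V) := {w | a.eval w = true}

/-- Models of a set of formulas. -/
def SMod {V : Type} (X : Set (Form V)) : Set (World V) := {w | ∀ a ∈ X, a.eval w = true}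

/-- Deductive closure (consequence operator). -/
def Cn {V : Type} (X : Set (Form V)) : Set (Form V) := {b | ∀ w ∈ SMod X, b.eval w = true}

/-- Minimal elements of a set of worlds w.r.t. a relation. -/
def minSet {V : Type} (S : Set (World V)) (r : World V → World V → Prop) : Set (World V) :=
  {w ∈ S | ∀ w' ∈ S, r w w'}

/-- Total preorder: total (hence reflexive) and transitive. -/
def TotalPre {V : Type} (r : World V → World V → Prop) : Prop :=
  (∀ x y, r x y ∨ r y x) ∧ (∀ x y z, r x y → r y z → r x z)

/-- A belief change operator over epistemic states `E`: each state has a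
deductively closed belief set, and the operator maps a state and a formula to a state. -/
structure BCO (V E : Type) where
  Bel : E → Set (Form V)
  closed : ∀ Ψ, Cn (Bel Ψ) = Bel Ψ
  op : E → Form V → E

/-- Models of (the belief set of) an epistemic state. -/
def stMod {V E : Type} (O : BCO V E) (Ψ : E) : Set (World V) := SMod (O.Bel Ψ)

/-- Faithful assignment: each `le Ψ` is a total preorder; models of `Ψ` are mutually
equivalent and strictly below non-models. -/
def Faithful {V E : Type} (O : BCO V E) (le : E → World V → World V → Prop) : Prop :=
  (∀ Ψ, TotalPre (le Ψ)) ∧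
  (∀ Ψ w₁ w₂, w₁ ∈ stMod O Ψ → w₂ ∈ stMod O Ψ → le Ψ w₁ w₂) ∧
  (∀ Ψ w₁ w₂, w₁ ∈ stMod O Ψ → w₂ ∉ stMod O Ψ → (le Ψ w₁ w₂ ∧ ¬ le Ψ w₂ w₁))

/-- Contraction-compatibility: `[[Ψ ÷ α]] = [[Ψ]] ∪ min([[¬α]], ≤_Ψ)`. -/
def ContrCompat {V E : Type} (O : BCO V E) (le : E → World V → World V → Prop) : Prop :=
  ∀ Ψ (α : Form V), stMod O (O.op Ψ α) = stMod O Ψ ∪ minSet (FMod α.neg) (le Ψ)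

/-- Revision-compatibility: `[[Ψ * α]] = min([[α]], ≤_Ψ)`. -/
def RevCompat {V E : Type} (O : BCO V E) (le : E → World V → World V → Prop) : Prop :=
  ∀ Ψ (α : Form V), stMod O (O.op Ψ α) = minSet (FMod α) (le Ψ)

/-- The AGM contraction postulates (C1)–(C7) for epistemic states. -/
def AGMContr {V E : Type} (O : BCO V E) : Prop :=
  (∀ Ψ α, O.Bel (O.op Ψ α) ⊆ O.Bel Ψ) ∧
  (∀ Ψ α, α ∉ O.Bel Ψ → O.Bel Ψ ⊆ O.Bel (O.op Ψ α)) ∧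
  (∀ Ψ (α : Form V), ¬ (∀ w, w ∈ FMod α) → α ∉ O.Bel (O.op Ψ α)) ∧
  (∀ Ψ α, O.Bel Ψ ⊆ Cn (O.Bel (O.op Ψ α) ∪ {α})) ∧
  (∀ Ψ α β, FMod α = FMod β → O.Bel (O.op Ψ α) = O.Bel (O.op Ψ β)) ∧
  (∀ Ψ (α β : Form V), O.Bel (O.op Ψ α) ∩ O.Bel (O.op Ψ β) ⊆ O.Bel (O.op Ψ (α.conj β))) ∧
  (∀ Ψ (α β : Form V), β ∉ O.Bel (O.op Ψ (α.conj β)) → O.Bel (O.op Ψ (α.conj β)) ⊆ O.Bel (O.op Ψ β))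

/-- Unbiasedness: every consistent set of formulas has an epistemic state whose
belief set is its deductive closure. -/
def Unbiased {V E : Type} (O : BCO V E) : Prop :=
  ∀ L : Set (Form V), (SMod L).Nonempty → ∃ Ψ : E, O.Bel Ψ = Cn L

/-!
(ICʳᵉˡ_ind) ⇒ (IC_ind): a model `u` of `Ψ ÷ α ÷ β` falsifying `γ` would be a `≤_{Ψ÷α}`-minimal
countermodel of `β` satisfying `α` and lying outside `[[Ψ]]`. A model `w` of `Ψ ÷ β` falsifying
`¬α → β` lies `≤_Ψ`-below `u`, so (ICʳᵉˡ_ind) puts `w` strictly below `u` for `≤_{Ψ÷α}`,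
contradicting the minimality of `u`.

(IC_ind) ⇒ (ICʳᵉˡ_ind): over finitely many variables every set of worlds is definable, so take
`[[β]] = {ω₁, ω₂}ᶜ` and `[[γ]] = {ω₂}ᶜ`. Then `ω₁ ∈ [[Ψ ÷ β]]` refutes `¬α → β` and `Ψ ÷ α ⊨ γ`,
hence `Ψ ÷ α ÷ β ⊨ γ` by (IC_ind): `ω₂` is not `≤_{Ψ÷α}`-minimal in `{ω₁, ω₂}`.
-/

section Semantics

variable {V : Type}

@[simp] lemma FMod_var (v : V) : FMod (Form.var v) = {w | w v = true} := rfl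

@[simp] lemma FMod_imp (a b : Form V) : FMod (a.imp b) = (FMod a)ᶜ ∪ FMod b := by
  ext w
  simp [FMod, Form.eval]

@[simp] lemma FMod_neg (a : Form V) : FMod a.neg = (FMod a)ᶜ := by
  ext w
  simp [Form.neg, FMod, Form.eval]

lemma mem_FMod_neg {a : Form V} {w : World V} : w ∈ FMod a.neg ↔ w ∉ FMod a := by
  rw [FMod_neg, Set.mem_compl_iff]

@[simp] lemma FMod_top : FMod (Form.top : Form V) = Set.univ := by
  ext w
  simp [Form.top, FMod, Form.neg, Form.eval]

@[simp] lemma FMod_conj (a b : Form V) : FMod (a.conj b) = FMod a ∩ FMod b := by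
  simp [Form.conj, Set.compl_union]

lemma exists_FMod_eq_compl {S : Set (World V)} (h : ∃ φ : Form V, FMod φ = S) :
    ∃ φ : Form V, FMod φ = Sᶜ := by
  obtain ⟨φ, rfl⟩ := h
  exact ⟨φ.neg, FMod_neg φ⟩

lemma exists_FMod_eq_biInter {ι : Type*} [DecidableEq ι] (s : Finset ι) (f : ι → Set (World V))
    (h : ∀ i ∈ s, ∃ φ : Form V, FMod φ = f i) : ∃ φ : Form V, FMod φ = ⋂ i ∈ s, f i := by
  induction s using Finset.induction_on with
  | empty => exact ⟨Form.top, by simp⟩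
  | insert i s _ ih =>
    obtain ⟨φ, hφ⟩ := h i (Finset.mem_insert_self i s)
    obtain ⟨ψ, hψ⟩ := ih fun j hj => h j (Finset.mem_insert_of_mem hj)
    exact ⟨φ.conj ψ, by rw [Finset.set_biInter_insert, FMod_conj, hφ, hψ]⟩

lemma exists_FMod_eq_singleton [Fintype V] (ω : World V) : ∃ φ : Form V, FMod φ = {ω} := by
  classical
  have hω : ({ω} : Set (World V)) = ⋂ v ∈ Finset.univ, {w | w v = ω v} := by
    ext w
    simp [funext_iff]
  rw [hω]
  refine exists_FMod_eq_biInter _ _ fun v _ => ?_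
  cases hv : ω v
  · exact ⟨(Form.var v).neg, by ext w; simp⟩
  · exact ⟨Form.var v, rfl⟩

theorem exists_FMod_eq [Fintype V] (S : Set (World V)) : ∃ φ : Form V, FMod φ = S := by
  classical
  have hS : S = ⋂ ω ∈ (Sᶜ).toFinite.toFinset, ({ω} : Set (World V))ᶜ := by
    ext w
    simp only [Set.Finite.mem_toFinset, Set.mem_iInter, Set.mem_compl_iff, Set.mem_singleton_iff]
    exact ⟨fun hw ω hω h => hω (h ▸ hw), fun h => by_contra (h w · rfl)⟩
  rw [hS]
  exact exists_FMod_eq_biInter _ _ fun ω _ => exists_FMod_eq_compl (exists_FMod_eq_singleton ω)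

end Semantics

section Contraction

variable {V E : Type} {O : BCO V E} {le : E → World V → World V → Prop}

lemma mem_Bel_iff {Ψ : E} {γ : Form V} : γ ∈ O.Bel Ψ ↔ stMod O Ψ ⊆ FMod γ :=
  ⟨fun h _ hw => hw γ h, fun h => O.closed Ψ ▸ h⟩

lemma stMod_subset_stMod_op (hC : ContrCompat O le) (Ψ : E) (α : Form V) :
    stMod O Ψ ⊆ stMod O (O.op Ψ α) := by
  rw [hC]
  exact Set.subset_union_left

lemma le_of_mem_stMod_op (hF : Faithful O le) (hC : ContrCompat O le) {Ψ : E} {β : Form V}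
    {w u : World V} (hw : w ∈ stMod O (O.op Ψ β)) (hu : u ∈ FMod β.neg) (huΨ : u ∉ stMod O Ψ) :
    le Ψ w u := by
  rw [hC] at hw
  rcases hw with hwΨ | hwmin
  · exact (hF.2.2 Ψ w u hwΨ huΨ).1
  · exact hwmin.2 u hu

lemma mem_minSet_pair {r : World V → World V → Prop} {a b : World V} (hr : r a a) (hab : r a b) :
    a ∈ minSet {a, b} r := by
  refine ⟨Set.mem_insert a {b}, ?_⟩
  rintro w (rfl | rfl)
  exacts [hr, hab]

end Contraction

def ICInd {V E : Type} (O : BCO V E) : Prop :=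
  ∀ (Ψ : E) (α β γ : Form V), FMod α.neg ⊆ FMod γ →
    Form.imp α.neg β ∉ O.Bel (O.op Ψ β) →
      γ ∈ O.Bel (O.op Ψ α) → γ ∈ O.Bel (O.op (O.op Ψ α) β)

def ICRelInd {V E : Type} (O : BCO V E) (le : E → World V → World V → Prop) : Prop :=
  ∀ (Ψ : E) (α : Form V) (ω₁ ω₂ : World V),
    ω₁ ∈ FMod α.neg → ω₂ ∈ FMod α → ω₂ ∉ stMod O Ψ →
      le Ψ ω₁ ω₂ → (le (O.op Ψ α) ω₁ ω₂ ∧ ¬ le (O.op Ψ α) ω₂ ω₁)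

section Independence

variable {V E : Type} {O : BCO V E} {le : E → World V → World V → Prop}

theorem icInd_of_icRelInd (hF : Faithful O le) (hC : ContrCompat O le) (hRel : ICRelInd O le) :
    ICInd O := by
  intro Ψ α β γ hαγ hβ hγ
  rw [mem_Bel_iff] at hγ hβ ⊢
  obtain ⟨w, hw, hwβ⟩ := Set.not_subset.1 hβ
  simp only [FMod_imp, FMod_neg, compl_compl, Set.mem_union, not_or] at hwβ
  intro u hu
  rw [hC] at hu
  rcases hu with hu | humin
  · exact hγ hu
  by_contra huγ
  have huα : u ∈ FMod α := by_contra fun huα => huγ (hαγ (mem_FMod_neg.2 huα))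
  have huΨ : u ∉ stMod O Ψ := fun huΨ => huγ (hγ (stMod_subset_stMod_op hC Ψ α huΨ))
  have hwu : le Ψ w u := le_of_mem_stMod_op hF hC hw humin.1 huΨ
  exact (hRel Ψ α w u (mem_FMod_neg.2 hwβ.1) huα huΨ hwu).2 (humin.2 w (mem_FMod_neg.2 hwβ.2))

theorem icRelInd_of_icInd [Fintype V] (htot : ∀ Ψ, TotalPre (le Ψ)) (hC : ContrCompat O le)
    (hInd : ICInd O) : ICRelInd O le := by
  intro Ψ α ω₁ ω₂ h₁ h₂ h₂Ψ h₁₂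
  have hrefl (Ψ : E) (w : World V) : le Ψ w w := ((htot Ψ).1 w w).elim id id
  obtain ⟨β, hβ⟩ := exists_FMod_eq ({ω₁, ω₂}ᶜ : Set (World V))
  obtain ⟨γ, hγ⟩ := exists_FMod_eq ({ω₂}ᶜ : Set (World V))
  have hβneg : FMod β.neg = {ω₁, ω₂} := by rw [FMod_neg, hβ, compl_compl]
  have hαγ : FMod α.neg ⊆ FMod γ := by
    rw [hγ]
    rintro w hw (rfl : w = ω₂)
    exact mem_FMod_neg.1 hw h₂
  have hαβ : Form.imp α.neg β ∉ O.Bel (O.op Ψ β) := by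
    rw [mem_Bel_iff, hC, hβneg]
    intro h
    simpa [hβ, mem_FMod_neg.1 h₁] using h (Or.inr (mem_minSet_pair (hrefl Ψ ω₁) h₁₂))
  have hγα : γ ∈ O.Bel (O.op Ψ α) := by
    rw [mem_Bel_iff, hC, hγ]
    rintro w hw (rfl : w = ω₂)
    exact hw.elim h₂Ψ fun hmin => mem_FMod_neg.1 hmin.1 h₂
  have hγαβ := mem_Bel_iff.1 (hInd Ψ α β γ hαγ hαβ hγα)
  have hnot : ¬ le (O.op Ψ α) ω₂ ω₁ := by
    intro h₂₁
    have hω₂ : ω₂ ∈ stMod O (O.op (O.op Ψ α) β) := by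
      rw [hC, hβneg, Set.pair_comm]
      exact Or.inr (mem_minSet_pair (hrefl _ ω₂) h₂₁)
    simpa [hγ] using hγαβ hω₂
  exact ⟨((htot _).1 ω₁ ω₂).resolve_right hnot, hnot⟩

end Independence

theorem stmt_18_general {V E : Type} [Fintype V] (O : BCO V E)
    (le : E → World V → World V → Prop)
    (hF : Faithful O le) (hC : ContrCompat O le) :
    (∀ (Ψ : E) (α β γ : Form V), FMod α.neg ⊆ FMod γ →
        Form.imp α.neg β ∉ O.Bel (O.op Ψ β) →
          γ ∈ O.Bel (O.op Ψ α) → γ ∈ O.Bel (O.op (O.op Ψ α) β)) ↔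
    (∀ (Ψ : E) (α : Form V) (ω₁ ω₂ : World V),
        ω₁ ∈ FMod α.neg → ω₂ ∈ FMod α → ω₂ ∉ stMod O Ψ →
          le Ψ ω₁ ω₂ → (le (O.op Ψ α) ω₁ ω₂ ∧ ¬ le (O.op Ψ α) ω₂ ω₁)) :=
  ⟨icRelInd_of_icInd hF.1 hC, icInd_of_icRelInd hF hC⟩

/-- (IC_ind) holds iff the assignment satisfies (ICʳᵉˡ_ind). -/
theorem stmt_18 {V E : Type} [Fintype V] (O : BCO V E)
    (le : E → World V → World V → Prop)
    (hA : AGMContr O) (hF : Faithful O le) (hC : ContrCompat O le) :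
    (∀ (Ψ : E) (α β γ : Form V), FMod α.neg ⊆ FMod γ →
        Form.imp α.neg β ∉ O.Bel (O.op Ψ β) →
          γ ∈ O.Bel (O.op Ψ α) → γ ∈ O.Bel (O.op (O.op Ψ α) β)) ↔
    (∀ (Ψ : E) (α : Form V) (ω₁ ω₂ : World V),
        ω₁ ∈ FMod α.neg → ω₂ ∈ FMod α → ω₂ ∉ stMod O Ψ →
          le Ψ ω₁ ω₂ → (le (O.op Ψ α) ω₁ ω₂ ∧ ¬ le (O.op Ψ α) ω₂ ω₁)) :=
  stmt_18_general O le hF hC
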